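/- arXiv:2101.01384 — 2 statements merged into one kernel-verified Lean document; each statement's English description precedes it below -/
import Mathlib

section
/- Let u₁ ∈ ℂ. The polynomial f₀ = x³ + y⁹ + u₁x²y³ has an isolated singularity at the origin (i.e., the only common zero in ℂ² of ∂f₀/∂x = 3x² + 2u₁xy³ and ∂f₀/∂y = 9y⁸ + 3u₁x²y² is the origin) if and only if 4u₁³ + 27 ≠ 0. -/
/-!
Eliminating `x` from the two partial derivatives leaves `y⁸ (4u₁³ + 27) = 0`: either `x = 0`,
or `3x = -2u₁y³`, and substituting this into `∂f₀/∂y` gives `y⁸ (4u₁³ + 27) / 3`. So for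
`4u₁³ + 27 ≠ 0` a critical point has `y = 0`, hence `x = 0`; for `4u₁³ + 27 = 0` the point
`(-2u₁/3, 1)` on the line `3x + 2u₁y³ = 0` is a critical point off the origin.
-/

namespace J16

variable {K : Type*} [Field K]

/-- The critical locus of `x³ + y⁹ + u x² y³`. -/
def IsCritical (u x y : K) : Prop :=
  3 * x ^ 2 + 2 * u * x * y ^ 3 = 0 ∧ 9 * y ^ 8 + 3 * u * x ^ 2 * y ^ 2 = 0

theorem isCritical_neg_two_mul_div_three_one [NeZero (3 : K)] {u : K}
    (hu : 4 * u ^ 3 + 27 = 0) : IsCritical u (-2 * u / 3) 1 := by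
  have h3 : (3 : K) ≠ 0 := NeZero.ne 3
  constructor
  · field_simp
    ring
  · field_simp
    linear_combination hu

theorem pow_eight_mul_discr_eq_zero [NeZero (3 : K)] {u x y : K} (h : IsCritical u x y) :
    y ^ 8 * (4 * u ^ 3 + 27) = 0 := by
  obtain ⟨hx, hy⟩ := h
  have hline : x * (3 * x + 2 * u * y ^ 3) = 0 := by linear_combination hx
  rcases mul_eq_zero.mp hline with rfl | hline
  · have h9 : (9 : K) ≠ 0 := by
      rw [show (9 : K) = 3 ^ 2 by norm_num]
      exact pow_ne_zero 2 (NeZero.ne 3)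
    have hy8 : y ^ 8 = 0 := by simpa [h9] using hy
    simp [hy8]
  · linear_combination 3 * hy + u * y ^ 2 * (2 * u * y ^ 3 - 3 * x) * hline

theorem eq_zero_of_isCritical [NeZero (3 : K)] {u x y : K} (hu : 4 * u ^ 3 + 27 ≠ 0)
    (h : IsCritical u x y) : x = 0 ∧ y = 0 := by
  have hy : y = 0 := pow_eq_zero_iff (n := 8) (by norm_num) |>.mp
    ((mul_eq_zero.mp (pow_eight_mul_discr_eq_zero h)).resolve_right hu)
  subst hy
  have hx : (3 : K) * x ^ 2 = 0 := by simpa using h.1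
  simpa [NeZero.ne] using hx

end J16

open J16 in
/-- `x^3 + y^9 + u₁ x^2 y^3` (J₁₆) has an isolated singularity at the origin iff
`4u₁³ + 27 ≠ 0`. -/
theorem J16_isolated_singularity_iff (u₁ : ℂ) :
    (∀ x y : ℂ, 3 * x ^ 2 + 2 * u₁ * x * y ^ 3 = 0 ∧
        9 * y ^ 8 + 3 * u₁ * x ^ 2 * y ^ 2 = 0 → x = 0 ∧ y = 0) ↔
      4 * u₁ ^ 3 + 27 ≠ 0 := by
  refine ⟨fun hiso hu => ?_, fun hu x y => eq_zero_of_isCritical hu⟩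
  exact one_ne_zero (hiso _ _ (isCritical_neg_two_mul_div_three_one hu)).2
end

section
/- Let u₁, u₂ ∈ ℂ with u₁·(27u₁⁴ + 256u₂) ≠ 0, and let f = x³ + xz² + y⁵ + u₁y²z² + u₂y³z². Then the only point of ℂ³ at which f, ∂f/∂x, ∂f/∂y, ∂f/∂z all vanish is the origin (0,0,0). -/
/-!
Off the plane `z = 0`, `∂f/∂z = 2z(x + y²w)` with `w = u₁ + u₂y` forces `x = -y²w`. Substituting,
`f = y⁵(1 - yw³)` and, using `z² = -3x²`, `∂f/∂y = y⁴(5 - 3yw²(2u₁ + 3u₂y))`, so a singular point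
with `z ≠ 0` satisfies `yw³ = 1` and `3u₂y²w² = -1`. Eliminating `y` and `w` from these two
relations gives `27u₁⁴ + 256u₂ = 0`.
-/

namespace U16

variable {K : Type*} [Field K]

theorem x_eq_zero_and_y_eq_zero_of_z_eq_zero [CharZero K] {u₁ u₂ x y z : K}
    (hx : 3 * x ^ 2 + z ^ 2 = 0) (hy : 5 * y ^ 4 + 2 * u₁ * y * z ^ 2 + 3 * u₂ * y ^ 2 * z ^ 2 = 0)
    (hz : z = 0) : x = 0 ∧ y = 0 := by
  subst hz
  have hx2 : x ^ 2 = 0 := by linear_combination hx / 3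
  have hy4 : y ^ 4 = 0 := by linear_combination hy / 5
  exact ⟨pow_eq_zero_iff two_ne_zero |>.1 hx2, pow_eq_zero_iff four_ne_zero |>.1 hy4⟩

theorem x_eq_of_z_ne_zero [CharZero K] {u₁ u₂ x y z : K}
    (hz : 2 * x * z + 2 * u₁ * y ^ 2 * z + 2 * u₂ * y ^ 3 * z = 0) (hz0 : z ≠ 0) :
    x = -(y ^ 2 * (u₁ + u₂ * y)) := by
  have hfactor : (2 * z) * (x + y ^ 2 * (u₁ + u₂ * y)) = 0 := by linear_combination hz
  have h2z : 2 * z ≠ 0 := mul_ne_zero two_ne_zero hz0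
  linear_combination (mul_eq_zero.1 hfactor).resolve_left h2z

theorem y_ne_zero_of_z_ne_zero {u₁ u₂ y z : K}
    (hx : 3 * (-(y ^ 2 * (u₁ + u₂ * y))) ^ 2 + z ^ 2 = 0) (hz0 : z ≠ 0) : y ≠ 0 := by
  rintro rfl
  exact hz0 (pow_eq_zero_iff two_ne_zero |>.1 (by linear_combination hx))

theorem y_mul_cube_eq_one {u₁ u₂ y z : K} (hy0 : y ≠ 0)
    (hf : (-(y ^ 2 * (u₁ + u₂ * y))) ^ 3 + (-(y ^ 2 * (u₁ + u₂ * y))) * z ^ 2 + y ^ 5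
      + u₁ * y ^ 2 * z ^ 2 + u₂ * y ^ 3 * z ^ 2 = 0) :
    y * (u₁ + u₂ * y) ^ 3 = 1 := by
  have hfactor : y ^ 5 * (y * (u₁ + u₂ * y) ^ 3 - 1) = 0 := by linear_combination -hf
  linear_combination (mul_eq_zero.1 hfactor).resolve_left (pow_ne_zero 5 hy0)

theorem three_mul_u₂_mul_eq_neg_one {u₁ u₂ y z : K} (hy0 : y ≠ 0)
    (hx : 3 * (-(y ^ 2 * (u₁ + u₂ * y))) ^ 2 + z ^ 2 = 0)
    (hy : 5 * y ^ 4 + 2 * u₁ * y * z ^ 2 + 3 * u₂ * y ^ 2 * z ^ 2 = 0)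
    (hA : y * (u₁ + u₂ * y) ^ 3 = 1) :
    3 * u₂ * y ^ 2 * (u₁ + u₂ * y) ^ 2 = -1 := by
  have hfactor : y ^ 4 * (5 - 3 * y * (u₁ + u₂ * y) ^ 2 * (2 * u₁ + 3 * u₂ * y)) = 0 := by
    linear_combination hy - (2 * u₁ * y + 3 * u₂ * y ^ 2) * hx
  linear_combination -(mul_eq_zero.1 hfactor).resolve_left (pow_ne_zero 4 hy0) - 6 * hA

theorem discr_eq_zero_of_relations [CharZero K] {u₁ u₂ y : K}
    (hA : y * (u₁ + u₂ * y) ^ 3 = 1) (hB : 3 * u₂ * y ^ 2 * (u₁ + u₂ * y) ^ 2 = -1) :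
    27 * u₁ ^ 4 + 256 * u₂ = 0 := by
  set w := u₁ + u₂ * y
  have h₁ : u₁ * y * w ^ 2 = 4 / 3 := by linear_combination hA - hB / 3
  have h₂ : u₁ ^ 2 * y * w = 16 / 9 := by
    linear_combination (u₁ * y * w ^ 2 + 4 / 3) * h₁ - u₁ ^ 2 * y * w * hA
  have h₄ : u₁ ^ 4 * y ^ 2 * w ^ 2 = 256 / 81 := by
    linear_combination (u₁ ^ 2 * y * w + 16 / 9) * h₂
  linear_combination 27 * u₁ ^ 4 * hB - 81 * u₂ * h₄

end U16

/-- For generic parameters `u₁(27u₁⁴ + 256u₂) ≠ 0`, the singular locus of the U₁₆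
deformation `f = x³ + xz² + y⁵ + u₁y²z² + u₂y³z²` is just the origin. -/
theorem U16_generic_singular_locus (u₁ u₂ : ℂ)
    (h : u₁ * (27 * u₁ ^ 4 + 256 * u₂) ≠ 0) :
    ∀ x y z : ℂ,
      x ^ 3 + x * z ^ 2 + y ^ 5 + u₁ * y ^ 2 * z ^ 2 + u₂ * y ^ 3 * z ^ 2 = 0 →
      3 * x ^ 2 + z ^ 2 = 0 →
      5 * y ^ 4 + 2 * u₁ * y * z ^ 2 + 3 * u₂ * y ^ 2 * z ^ 2 = 0 →
      2 * x * z + 2 * u₁ * y ^ 2 * z + 2 * u₂ * y ^ 3 * z = 0 →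
      x = 0 ∧ y = 0 ∧ z = 0 := by
  intro x y z hf hx hy hz
  by_cases hz0 : z = 0
  · obtain ⟨rfl, rfl⟩ := U16.x_eq_zero_and_y_eq_zero_of_z_eq_zero hx hy hz0
    exact ⟨rfl, rfl, hz0⟩
  obtain rfl := U16.x_eq_of_z_ne_zero hz hz0
  have hy0 := U16.y_ne_zero_of_z_ne_zero hx hz0
  have hA := U16.y_mul_cube_eq_one hy0 hf
  have hB := U16.three_mul_u₂_mul_eq_neg_one hy0 hx hy hA
  exact absurd (mul_eq_zero_of_right u₁ (U16.discr_eq_zero_of_relations hA hB)) h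
end
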